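/- Let M, N : ℝ³ → ℝ be continuous, let φ : ℝ² → ℝ be differentiable, and let I : ℝ³ → ℝ be differentiable such that for all (x, y) ∈ ℝ², writing u = φ(x,y): N(x,y,u)·∂I/∂x(x,y,u) + M(x,y,u)·∂I/∂y(x,y,u) + (N(x,y,u)·∂φ/∂x(x,y) + M(x,y,u)·∂φ/∂y(x,y))·∂I/∂z(x,y,u) = 0. If J ⊆ ℝ is an interval and y : J → ℝ is differentiable with N(x, y(x), φ(x,y(x))) ≠ 0 and y'(x) = M(x, y(x), φ(x,y(x)))/N(x, y(x), φ(x,y(x))) for all x ∈ J, then the function x ↦ I(x, y(x), φ(x, y(x))) is constant on J. -/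

import Mathlib

/-!
Along a solution `x ↦ (x, y x)`, the chain rule gives the derivative of
`x ↦ I (x, y x, φ (x, y x))` as the derivative of `I` along the vector field `(N, M, Nφₓ + Mφ_y)`
of the associated 3D system, divided by `N`; this vanishes because `I` is a first integral.
On an interval, a function with vanishing derivative is constant.
-/

/-- Partial derivative in the `x` direction of a function on `ℝ³`. -/
noncomputable def pdX (F : ℝ × ℝ × ℝ → ℝ) (p : ℝ × ℝ × ℝ) : ℝ :=
  fderiv ℝ F p (1, 0, 0)

/-- Partial derivative in the `y` direction. -/
noncomputable def pdY (F : ℝ × ℝ × ℝ → ℝ) (p : ℝ × ℝ × ℝ) : ℝ :=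
  fderiv ℝ F p (0, 1, 0)

/-- Partial derivative in the `z` direction. -/
noncomputable def pdZ (F : ℝ × ℝ × ℝ → ℝ) (p : ℝ × ℝ × ℝ) : ℝ :=
  fderiv ℝ F p (0, 0, 1)

/-- Partial derivative in the first direction of a function on `ℝ²`. -/
noncomputable def pdX2 (F : ℝ × ℝ → ℝ) (q : ℝ × ℝ) : ℝ :=
  fderiv ℝ F q (1, 0)

/-- Partial derivative in the second direction of a function on `ℝ²`. -/
noncomputable def pdY2 (F : ℝ × ℝ → ℝ) (q : ℝ × ℝ) : ℝ :=
  fderiv ℝ F q (0, 1)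

theorem Set.OrdConnected.eq_of_hasDerivAt_eq_zero {E : Type*} [NormedAddCommGroup E]
    [NormedSpace ℝ E] {J : Set ℝ} (hJ : J.OrdConnected) {f : ℝ → E}
    (hf : ∀ x ∈ J, HasDerivAt f 0 x) {a b : ℝ} (ha : a ∈ J) (hb : b ∈ J) : f a = f b := by
  have h := hJ.convex.norm_image_sub_le_of_norm_hasDerivWithin_le
    (fun x hx => (hf x hx).hasDerivWithinAt) (fun _ _ => (norm_zero (E := E)).le) ha hb
  rw [zero_mul, norm_le_zero_iff, sub_eq_zero] at h
  exact h.symm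

theorem fderiv_apply_eq_pdX2_pdY2 (F : ℝ × ℝ → ℝ) (q : ℝ × ℝ) (a b : ℝ) :
    fderiv ℝ F q (a, b) = a * pdX2 F q + b * pdY2 F q := by
  have hab : ((a, b) : ℝ × ℝ) = a • ((1 : ℝ), (0 : ℝ)) + b • ((0 : ℝ), (1 : ℝ)) := by
    simp
  rw [hab, map_add, map_smul, map_smul, smul_eq_mul, smul_eq_mul, pdX2, pdY2]

theorem fderiv_apply_eq_pdX_pdY_pdZ (F : ℝ × ℝ × ℝ → ℝ) (p : ℝ × ℝ × ℝ) (a b c : ℝ) :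
    fderiv ℝ F p (a, b, c) = a * pdX F p + b * pdY F p + c * pdZ F p := by
  have habc : ((a, b, c) : ℝ × ℝ × ℝ) =
      a • ((1 : ℝ), (0 : ℝ), (0 : ℝ)) + b • ((0 : ℝ), (1 : ℝ), (0 : ℝ))
        + c • ((0 : ℝ), (0 : ℝ), (1 : ℝ)) := by
    simp
  rw [habc, map_add, map_add, map_smul, map_smul, map_smul, smul_eq_mul, smul_eq_mul,
    smul_eq_mul, pdX, pdY, pdZ]

theorem DifferentiableAt.hasDerivAt_comp_graph {φ : ℝ × ℝ → ℝ} {y : ℝ → ℝ} {y' x : ℝ}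
    (hφ : DifferentiableAt ℝ φ (x, y x)) (hy : HasDerivAt y y' x) :
    HasDerivAt (fun t => φ (t, y t)) (pdX2 φ (x, y x) + y' * pdY2 φ (x, y x)) x := by
  have h := hφ.hasFDerivAt.comp_hasDerivAt x ((hasDerivAt_id x).prodMk hy)
  rwa [fderiv_apply_eq_pdX2_pdY2, one_mul] at h

theorem DifferentiableAt.hasDerivAt_comp_curve3 {F : ℝ × ℝ × ℝ → ℝ} {γ : ℝ → ℝ × ℝ × ℝ} {a b c x : ℝ}
    (hF : DifferentiableAt ℝ F (γ x)) (hγ : HasDerivAt γ (a, b, c) x) :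
    HasDerivAt (fun t => F (γ t))
      (a * pdX F (γ x) + b * pdY F (γ x) + c * pdZ F (γ x)) x := by
  have h := hF.hasFDerivAt.comp_hasDerivAt x hγ
  rwa [fderiv_apply_eq_pdX_pdY_pdZ] at h

theorem hasDerivAt_first_integral_along_solution {M N : ℝ × ℝ × ℝ → ℝ} {φ : ℝ × ℝ → ℝ}
    {I : ℝ × ℝ × ℝ → ℝ} {y : ℝ → ℝ} {x : ℝ}
    (hφ : DifferentiableAt ℝ φ (x, y x)) (hI : DifferentiableAt ℝ I (x, y x, φ (x, y x)))
    (hpde : N (x, y x, φ (x, y x)) * pdX I (x, y x, φ (x, y x))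
        + M (x, y x, φ (x, y x)) * pdY I (x, y x, φ (x, y x))
        + (N (x, y x, φ (x, y x)) * pdX2 φ (x, y x)
            + M (x, y x, φ (x, y x)) * pdY2 φ (x, y x)) * pdZ I (x, y x, φ (x, y x)) = 0)
    (hN : N (x, y x, φ (x, y x)) ≠ 0)
    (hy : HasDerivAt y (M (x, y x, φ (x, y x)) / N (x, y x, φ (x, y x))) x) :
    HasDerivAt (fun t => I (t, y t, φ (t, y t))) 0 x := by
  have hu := hφ.hasDerivAt_comp_graph hy
  have h := hI.hasDerivAt_comp_curve3 ((hasDerivAt_id' x).prodMk (hy.prodMk hu))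
  convert h using 1
  field_simp
  linear_combination -hpde

theorem invariant_of_1ode_with_function_of_x_and_y
    (M N : ℝ × ℝ × ℝ → ℝ)
    (φ : ℝ × ℝ → ℝ) (hφ : Differentiable ℝ φ)
    (I : ℝ × ℝ × ℝ → ℝ) (hI : Differentiable ℝ I)
    (hpde : ∀ x y : ℝ,
      N (x, y, φ (x, y)) * pdX I (x, y, φ (x, y))
        + M (x, y, φ (x, y)) * pdY I (x, y, φ (x, y))
        + (N (x, y, φ (x, y)) * pdX2 φ (x, y) + M (x, y, φ (x, y)) * pdY2 φ (x, y))
            * pdZ I (x, y, φ (x, y)) = 0)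
    (J : Set ℝ) (hJ : J.OrdConnected) (y : ℝ → ℝ)
    (hNne : ∀ x ∈ J, N (x, y x, φ (x, y x)) ≠ 0)
    (hy : ∀ x ∈ J,
      HasDerivAt y (M (x, y x, φ (x, y x)) / N (x, y x, φ (x, y x))) x) :
    ∀ a ∈ J, ∀ b ∈ J, I (a, y a, φ (a, y a)) = I (b, y b, φ (b, y b)) := fun _ ha _ hb =>
  hJ.eq_of_hasDerivAt_eq_zero (fun x hx => hasDerivAt_first_integral_along_solution
    (hφ _) (hI _) (hpde x (y x)) (hNne x hx) (hy x hx)) ha hb
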